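/- arXiv:1002.2177 — 5 statements merged into one kernel-verified Lean document; each statement's English description precedes it below -/
import Mathlib

section
/- Let 𝔤 be the 5-dimensional nilpotent Lie algebra D₁ = (e²⁴+e³⁵,0,0,0,0) with dual basis e¹,...,e⁵ and Chevalley–Eilenberg differential de¹ = e²⁴+e³⁵, de² = de³ = de⁴ = de⁵ = 0. Then the SU(2)-structure defined by the adapted coframe f¹=e², f²=e⁴, f³=e³, f⁴=e⁵, f⁵=e¹, i.e. α = e¹, ω₁ = e²⁴+e³⁵, ω₂ = e²³+e⁵⁴, ω₃ = e²⁵+e⁴³, is hypo: dω₁ = 0, d(ω₂∧α) = 0, d(ω₃∧α) = 0. -/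
open ExteriorAlgebra

/-- Basis `e¹,…,e⁵` of `𝔤*` (0-indexed: `e i` is `e^{i+1}`) inside `Λ*𝔤*`. -/
noncomputable def e (i : Fin 5) : ExteriorAlgebra ℝ (Fin 5 → ℝ) := ι ℝ (Pi.single i 1)

lemma esq (i : Fin 5) : e i * e i = 0 := ι_sq_zero _

lemma eswap (i j : Fin 5) : e i * e j = - (e j * e i) :=
  eq_neg_of_add_eq_zero_left (ι_add_mul_swap (Pi.single i 1) (Pi.single j 1))

lemma hjk (i j l : Fin 5) : e i * e j * e j * e l = 0 := by
  rw [mul_assoc (e i), esq, mul_zero, zero_mul]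

lemma hik (i j l : Fin 5) : e i * e j * e i * e l = 0 := by
  rw [mul_assoc (e i), eswap j i, mul_neg, ← mul_assoc, esq, zero_mul, neg_zero, zero_mul]

lemma hil (i j k : Fin 5) : e i * e j * e k * e i = 0 := by
  rw [mul_assoc, eswap k i, mul_neg, ← mul_assoc, hik, neg_zero]

lemma hjl (i j k : Fin 5) : e i * e j * e k * e j = 0 := by
  rw [mul_assoc, eswap k j, mul_neg, ← mul_assoc, hjk, neg_zero]

/-- on the nilpotent Lie algebra `D₁` with `de¹ = e²⁴+e³⁵`, `de² = ⋯ = de⁵ = 0`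
(the Chevalley–Eilenberg differential `d` being the antiderivation determined by these values),
the SU(2)-structure adapted to the coframe `f¹=e², f²=e⁴, f³=e³, f⁴=e⁵, f⁵=e¹` is hypo:
`dω₁ = 0`, `d(ω₂∧α) = 0`, `d(ω₃∧α) = 0` for `α = e¹`, `ω₁ = e²⁴+e³⁵`, `ω₂ = e²³+e⁵⁴`,
`ω₃ = e²⁵+e⁴³`. -/
theorem stmt3 (d : ExteriorAlgebra ℝ (Fin 5 → ℝ) →ₗ[ℝ] ExteriorAlgebra ℝ (Fin 5 → ℝ))
    (hone : d 1 = 0)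
    (hleib : ∀ (v : Fin 5 → ℝ) (x : ExteriorAlgebra ℝ (Fin 5 → ℝ)),
      d (ι ℝ v * x) = d (ι ℝ v) * x - ι ℝ v * d x)
    (h1 : d (e 0) = e 1 * e 3 + e 2 * e 4)
    (h2 : d (e 1) = 0) (h3 : d (e 2) = 0) (h4 : d (e 3) = 0) (h5 : d (e 4) = 0) :
    d (e 1 * e 3 + e 2 * e 4) = 0 ∧
    d ((e 1 * e 2 + e 4 * e 3) * e 0) = 0 ∧
    d ((e 1 * e 4 + e 3 * e 2) * e 0) = 0 := by
  have hl : ∀ (i : Fin 5) (x : ExteriorAlgebra ℝ (Fin 5 → ℝ)),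
      d (e i * x) = d (e i) * x - e i * d x := fun i x => hleib _ x
  have key : ∀ i j : Fin 5, d (e i * e j * e 0) =
      d (e i) * (e j * e 0) - e i * (d (e j) * e 0) + e i * (e j * d (e 0)) := by
    intro i j
    rw [mul_assoc, hl, hl, mul_sub]
    abel
  refine ⟨?_, ?_, ?_⟩
  · rw [map_add, hl, hl, h2, h3, h4, h5]
    simp
  · rw [add_mul, map_add, key, key, h1, h2, h3, h4, h5]
    simp [mul_add, ← mul_assoc, hik, hjk, hil, hjl]
  · rw [add_mul, map_add, key, key, h1, h2, h3, h4, h5]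
    simp [mul_add, ← mul_assoc, hik, hjk, hil, hjl]
end

section
/- Let 𝔤 be a finite-dimensional real Lie algebra with Chevalley–Eilenberg differential d, and suppose 𝔤* = V₁ ⊕ V₂ is a coherent splitting with dim V₁ = r, i.e. d(V₁) ⊆ Λ²V₁ and d(V₂) ⊆ Λ²V₁ + V₁∧V₂. If φ is a generator of Λ^r V₁ (a decomposable r-form spanning Λ^{r,0}), then dφ = 0, dα∧φ = 0 for all 1-forms α ∈ 𝔤*, and the Lie derivative L_X φ is a scalar multiple of φ for every X ∈ 𝔤. -/
/-!
Write `W := ι(V₁)` for the degree-one part of `Λ V₁` inside `Λ 𝔤*`, so that `W ^ k` is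
`Λ^{k,0}`. As `V₁` is spanned by the `r` vectors `vᵢ`, `W ^ (r + 1) = 0` and `W ^ r ⊆ ℝ φ`.
Coherence on `V₁` says `d W ⊆ W ^ 2`, so by the Leibniz rule `d` raises the filtration
`W ^ k` by one, while contraction with `X` lowers it by one. Hence `dφ ∈ W ^ (r + 1) = 0`
and `L_X φ = d(X⌟φ) ∈ W ^ r ⊆ ℝ φ`. Finally coherence puts every `dα` in the span of
`V₁ ∧ 𝔤*`, which annihilates `φ` because `a ∧ φ ∈ W ^ (r + 1)` for `a ∈ V₁`.
-/

open ExteriorAlgebra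

namespace ExteriorAlgebra

variable {R M : Type*} [CommRing R] [AddCommGroup M] [Module R M]

lemma ι_mul_mem_pow {V : Submodule R M} {m : M} (hm : m ∈ V) {k : ℕ}
    {x : ExteriorAlgebra R M} (hx : x ∈ V.map (ι R) ^ k) :
    ι R m * x ∈ V.map (ι R) ^ (k + 1) := by
  rw [pow_succ']
  exact Submodule.mul_mem_mul (Submodule.mem_map_of_mem hm) hx

lemma ιMulti_mem_pow {V : Submodule R M} {n : ℕ} {v : Fin n → M} (hv : ∀ i, v i ∈ V) :
    ιMulti R n v ∈ V.map (ι R) ^ n :=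
  Submodule.pow_subset_pow _ <| Set.mem_pow.mpr
    ⟨fun i => ⟨ι R (v i), Submodule.mem_map_of_mem (hv i)⟩, (ιMulti_apply v).symm⟩

lemma map_span_range_pow {I : Type*} (v : I → M) (n : ℕ) :
    (Submodule.span R (Set.range v)).map (ι R) ^ n =
      Submodule.span R (Set.range fun α : Fin n → I => ιMulti R n (v ∘ α)) := by
  rw [Submodule.map_span, ← Set.range_comp, Submodule.span_pow]
  congr 1
  ext x
  rw [Set.mem_pow]
  constructor
  · rintro ⟨f, rfl⟩
    choose α hα using fun i => (f i).2
    exact ⟨α, by simp only [ιMulti_apply, Function.comp_apply, ← hα]⟩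
  · rintro ⟨α, rfl⟩
    exact ⟨fun i => ⟨ι R (v (α i)), α i, rfl⟩, (ιMulti_apply _).symm⟩

lemma span_range_pow_eq_bot_of_lt {r n : ℕ} (v : Fin r → M) (h : r < n) :
    (Submodule.span R (Set.range v)).map (ι R) ^ n = ⊥ := by
  rw [map_span_range_pow, Submodule.span_eq_bot]
  rintro - ⟨α, rfl⟩
  refine AlternatingMap.map_eq_zero_of_not_injective _ _ fun hα => ?_
  exact h.not_ge (Fin.le_of_injective α hα.of_comp)

lemma span_range_pow_le_span_ιMulti {r : ℕ} (v : Fin r → M) :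
    (Submodule.span R (Set.range v)).map (ι R) ^ r ≤ R ∙ ιMulti R r v := by
  rw [map_span_range_pow, Submodule.span_le]
  rintro - ⟨α, rfl⟩
  change ιMulti R r (v ∘ α) ∈ R ∙ ιMulti R r v
  by_cases hα : Function.Injective α
  · have hσ : v ∘ α = v ∘ Equiv.ofBijective α hα.bijective_of_finite := rfl
    rw [hσ, AlternatingMap.map_perm]
    exact Submodule.smul_mem _ _ (Submodule.mem_span_singleton_self _)
  · rw [AlternatingMap.map_eq_zero_of_not_injective _ _ fun h => hα h.of_comp]
    exact zero_mem _

lemma span_ι_mul_ι_le_pow_two (V : Submodule R M) :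
    Submodule.span R {y | ∃ a ∈ V, ∃ b ∈ V, y = ι R a * ι R b} ≤ V.map (ι R) ^ 2 := by
  rw [Submodule.span_le, sq]
  rintro - ⟨a, ha, b, hb, rfl⟩
  exact Submodule.mul_mem_mul (Submodule.mem_map_of_mem ha) (Submodule.mem_map_of_mem hb)

lemma map_mem_pow_succ (d : ExteriorAlgebra R M →ₗ[R] ExteriorAlgebra R M) (hone : d 1 = 0)
    (hleib : ∀ (m : M) (x : ExteriorAlgebra R M), d (ι R m * x) = d (ι R m) * x - ι R m * d x)
    {V : Submodule R M} (hV : ∀ m ∈ V, d (ι R m) ∈ V.map (ι R) ^ 2)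
    {k : ℕ} {x : ExteriorAlgebra R M} (hx : x ∈ V.map (ι R) ^ k) :
    d x ∈ V.map (ι R) ^ (k + 1) := by
  induction hx using Submodule.pow_induction_on_left' with
  | algebraMap c =>
    rw [Algebra.algebraMap_eq_smul_one, map_smul, hone, smul_zero]
    exact zero_mem _
  | add x y i _ _ hx hy => rw [map_add]; exact add_mem hx hy
  | mem_mul m hm i x hx hdx =>
    obtain ⟨a, ha, rfl⟩ := hm
    have hdeg : V.map (ι R) ^ (i + 1 + 1) = V.map (ι R) ^ 2 * V.map (ι R) ^ i := by
      rw [← pow_add, add_comm 2, add_assoc]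
    rw [hleib]
    exact sub_mem (hdeg ▸ Submodule.mul_mem_mul (hV a ha) hx) (ι_mul_mem_pow ha hdx)

lemma contractLeft_mem_pow {V : Submodule R M} (X : Module.Dual R M) {k : ℕ}
    {x : ExteriorAlgebra R M} (hx : x ∈ V.map (ι R) ^ (k + 1)) :
    CliffordAlgebra.contractLeft X x ∈ V.map (ι R) ^ k := by
  induction k generalizing x with
  | zero =>
    obtain ⟨a, -, rfl⟩ := (pow_one (V.map (ι R))).le hx
    rw [CliffordAlgebra.contractLeft_ι, pow_zero]
    exact Submodule.algebraMap_mem _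
  | succ k ih =>
    rw [pow_succ'] at hx
    induction hx using Submodule.mul_induction_on' with
    | mem_mul_mem m hm y hy =>
      obtain ⟨a, ha, rfl⟩ := hm
      rw [CliffordAlgebra.contractLeft_ι_mul]
      exact sub_mem (Submodule.smul_mem _ _ hy) (ι_mul_mem_pow ha (ih hy))
    | add y _ z _ hy hz => rw [map_add]; exact add_mem hy hz

lemma map_contractLeft_mem_pow (d : ExteriorAlgebra R M →ₗ[R] ExteriorAlgebra R M)
    (hone : d 1 = 0)
    (hleib : ∀ (m : M) (x : ExteriorAlgebra R M), d (ι R m * x) = d (ι R m) * x - ι R m * d x)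
    {V : Submodule R M} (hV : ∀ m ∈ V, d (ι R m) ∈ V.map (ι R) ^ 2) (X : Module.Dual R M)
    {k : ℕ} {x : ExteriorAlgebra R M} (hx : x ∈ V.map (ι R) ^ k) :
    d (CliffordAlgebra.contractLeft X x) ∈ V.map (ι R) ^ k := by
  cases k with
  | zero =>
    obtain ⟨c, rfl⟩ := Submodule.mem_one.mp ((pow_zero (V.map (ι R))).le hx)
    rw [CliffordAlgebra.contractLeft_algebraMap, map_zero]
    exact zero_mem _
  | succ k => exact map_mem_pow_succ d hone hleib hV (contractLeft_mem_pow X hx)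

lemma mul_eq_zero_of_mem_span_ι_mul {V : Submodule R M} {x : ExteriorAlgebra R M}
    (hx : ∀ a ∈ V, ι R a * x = 0) {y : ExteriorAlgebra R M}
    (hy : y ∈ Submodule.span R {y | ∃ a ∈ V, ∃ b : M, y = ι R a * ι R b}) :
    y * x = 0 := by
  induction hy using Submodule.span_induction with
  | mem y hy =>
    obtain ⟨a, ha, b, rfl⟩ := hy
    rw [eq_neg_of_add_eq_zero_left (ι_add_mul_swap a b), neg_mul, mul_assoc, hx a ha,
      mul_zero, neg_zero]
  | zero => rw [zero_mul]
  | add y z _ _ hy hz => rw [add_mul, hy, hz, add_zero]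
  | smul c y _ hy => rw [smul_mul_assoc, hy, smul_zero]

end ExteriorAlgebra

theorem stmt5_general {M : Type*} [AddCommGroup M] [Module ℝ M]
    (d : ExteriorAlgebra ℝ M →ₗ[ℝ] ExteriorAlgebra ℝ M)
    (hone : d 1 = 0)
    (hleib : ∀ (m : M) (x : ExteriorAlgebra ℝ M),
      d (ι ℝ m * x) = d (ι ℝ m) * x - ι ℝ m * d x)
    (V1 V2 : Submodule ℝ M) (hcompl : IsCompl V1 V2)
    (r : ℕ)
    (hc1 : ∀ m ∈ V1, d (ι ℝ m) ∈
      Submodule.span ℝ {y : ExteriorAlgebra ℝ M | ∃ a ∈ V1, ∃ b ∈ V1, y = ι ℝ a * ι ℝ b})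
    (hc2 : ∀ m ∈ V2, d (ι ℝ m) ∈
      Submodule.span ℝ {y : ExteriorAlgebra ℝ M | ∃ a ∈ V1, ∃ b : M, y = ι ℝ a * ι ℝ b})
    (v : Fin r → M)
    (hvspan : Submodule.span ℝ (Set.range v) = V1)
    (φ : ExteriorAlgebra ℝ M) (hφ : φ = (List.ofFn fun i => ι ℝ (v i)).prod) :
    d φ = 0 ∧ (∀ a : M, d (ι ℝ a) * φ = 0) ∧
    ∀ X : Module.Dual ℝ M, ∃ c : ℝ,
      d (CliffordAlgebra.contractLeft X φ) + CliffordAlgebra.contractLeft X (d φ)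
        = c • φ := by
  rw [← ιMulti_apply] at hφ
  subst hφ
  have hφ_mem : ιMulti ℝ r v ∈ V1.map (ι ℝ) ^ r :=
    ιMulti_mem_pow fun i => hvspan ▸ Submodule.subset_span ⟨i, rfl⟩
  have htop : V1.map (ι ℝ) ^ (r + 1) = ⊥ := hvspan ▸ span_range_pow_eq_bot_of_lt v r.lt_succ_self
  have hV1 m hm := span_ι_mul_ι_le_pow_two V1 (hc1 m hm)
  have hdφ : d (ιMulti ℝ r v) = 0 := by
    simpa [htop] using map_mem_pow_succ d hone hleib hV1 hφ_mem
  refine ⟨hdφ, fun a => ?_, fun X => ?_⟩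
  · have ha : a ∈ V1 ⊔ V2 := hcompl.sup_eq_top ▸ Submodule.mem_top
    obtain ⟨a₁, ha₁, a₂, ha₂, rfl⟩ := Submodule.mem_sup.mp ha
    refine mul_eq_zero_of_mem_span_ι_mul (V := V1) (fun b hb => ?_) ?_
    · simpa [htop] using ι_mul_mem_pow hb hφ_mem
    · rw [map_add, map_add]
      refine add_mem (Submodule.span_mono ?_ (hc1 a₁ ha₁)) (hc2 a₂ ha₂)
      rintro - ⟨a, ha, b, -, rfl⟩
      exact ⟨a, ha, b, rfl⟩
  · have hspan : V1.map (ι ℝ) ^ r ≤ ℝ ∙ ιMulti ℝ r v := hvspan ▸ span_range_pow_le_span_ιMulti v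
    obtain ⟨c, hc⟩ := Submodule.mem_span_singleton.mp <|
      hspan (map_contractLeft_mem_pow d hone hleib hV1 X hφ_mem)
    exact ⟨c, by rw [hdφ, map_zero, add_zero, hc]⟩

/-- let `𝔤` be a finite-dimensional real Lie algebra, encoded by its
Chevalley–Eilenberg differential `d` on `Λ*𝔤*` (an antiderivation with `d² = 0`), and let
`𝔤* = V₁ ⊕ V₂` be a coherent splitting with `dim V₁ = r`, i.e. `d(V₁) ⊆ Λ²V₁` and
`d(V₂) ⊆ Λ²V₁ + V₁∧V₂ = V₁∧Λ¹`. If `φ = ι(v₁)∧⋯∧ι(v_r)` is a generator of `Λ^r V₁`,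
then `dφ = 0`, `dα∧φ = 0` for every 1-form `α`, and for every `X ∈ 𝔤 = (𝔤*)*` the Lie
derivative `L_X φ = d(X⌟φ) + X⌟(dφ)` is a scalar multiple of `φ`. -/
theorem stmt5 {M : Type*} [AddCommGroup M] [Module ℝ M] [FiniteDimensional ℝ M]
    (d : ExteriorAlgebra ℝ M →ₗ[ℝ] ExteriorAlgebra ℝ M)
    (hone : d 1 = 0)
    (hleib : ∀ (m : M) (x : ExteriorAlgebra ℝ M),
      d (ι ℝ m * x) = d (ι ℝ m) * x - ι ℝ m * d x)
    (hdd : ∀ x, d (d x) = 0)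
    (V1 V2 : Submodule ℝ M) (hcompl : IsCompl V1 V2)
    (r : ℕ) (hr : 2 ≤ r) (hdim : Module.finrank ℝ V1 = r)
    (hc1 : ∀ m ∈ V1, d (ι ℝ m) ∈
      Submodule.span ℝ {y : ExteriorAlgebra ℝ M | ∃ a ∈ V1, ∃ b ∈ V1, y = ι ℝ a * ι ℝ b})
    (hc2 : ∀ m ∈ V2, d (ι ℝ m) ∈
      Submodule.span ℝ {y : ExteriorAlgebra ℝ M | ∃ a ∈ V1, ∃ b : M, y = ι ℝ a * ι ℝ b})
    (v : Fin r → M) (hvli : LinearIndependent ℝ v)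
    (hvspan : Submodule.span ℝ (Set.range v) = V1)
    (φ : ExteriorAlgebra ℝ M) (hφ : φ = (List.ofFn fun i => ι ℝ (v i)).prod) :
    d φ = 0 ∧ (∀ a : M, d (ι ℝ a) * φ = 0) ∧
    ∀ X : Module.Dual ℝ M, ∃ c : ℝ,
      d (CliffordAlgebra.contractLeft X φ) + CliffordAlgebra.contractLeft X (d φ)
        = c • φ :=
  stmt5_general d hone hleib V1 V2 hcompl r hc1 hc2 v hvspan φ hφ
end

section
/- Let 𝔤 be a 5-dimensional real Lie algebra admitting a coherent splitting 𝔤* = V₁ ⊕ V₂ with dim V₁ = 2, and let φ span Λ²V₁. Suppose every closed 2-form γ on 𝔤 satisfies γ∧φ = 0 and every closed 3-form η satisfies η∧φ = 0. Then 𝔤 admits no hypo structure, i.e. there is no SU(2)-structure (α, ω₁, ω₂, ω₃) on 𝔤 with dω₁ = 0, d(ω₂∧α) = 0, d(ω₃∧α) = 0. -/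
open ExteriorAlgebra

/-- The space of 2-forms `Λ²𝔤*` (spanned by decomposable 2-forms). -/
noncomputable def Lam2 : Submodule ℝ (ExteriorAlgebra ℝ (Fin 5 → ℝ)) :=
  Submodule.span ℝ {x | ∃ a b : Fin 5 → ℝ, x = ι ℝ a * ι ℝ b}

/-- The space of 3-forms `Λ³𝔤*`. -/
noncomputable def Lam3 : Submodule ℝ (ExteriorAlgebra ℝ (Fin 5 → ℝ)) :=
  Submodule.span ℝ {x | ∃ a b c : Fin 5 → ℝ, x = ι ℝ a * ι ℝ b * ι ℝ c}

/-- A hypo structure on the 5-dimensional Lie algebra encoded by its Chevalley–Eilenberg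
differential `d`: a quadruplet `(α, ω₁, ω₂, ω₃)` of a 1-form `α = ι a` and 2-forms `ωᵢ`
with `ωᵢ∧ωⱼ = δᵢⱼ v` for a 4-form `v` with `v∧α ≠ 0`, such that
`dω₁ = 0`, `d(ω₂∧α) = 0`, `d(ω₃∧α) = 0`. -/
def IsHypo (d : ExteriorAlgebra ℝ (Fin 5 → ℝ) →ₗ[ℝ] ExteriorAlgebra ℝ (Fin 5 → ℝ))
    (a : Fin 5 → ℝ) (ω : Fin 3 → ExteriorAlgebra ℝ (Fin 5 → ℝ)) : Prop :=
  (∀ i, ω i ∈ Lam2) ∧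
  (∃ v : ExteriorAlgebra ℝ (Fin 5 → ℝ),
    (∀ i j, ω i * ω j = if i = j then v else 0) ∧ v * ι ℝ a ≠ 0) ∧
  d (ω 0) = 0 ∧ d (ω 1 * ι ℝ a) = 0 ∧ d (ω 2 * ι ℝ a) = 0

/-
Closedness of `ω₁`, `ω₂ ∧ α`, `ω₃ ∧ α` and the hypotheses on `φ = v₁ ∧ v₂` give `ω₁ ∧ φ = 0` and
`ωᵢ ∧ α ∧ φ = 0` for all `i`; in a basis adapted to `α` and `φ` this forces
`v ∧ α = ω₁ ∧ ω₁ ∧ α = 0`.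

If `α` lies in the plane of `φ = e¹ ∧ e²`, then `ω₁ ∧ φ = 0` kills the coefficients of `ω₁` on
`e³ ∧ e⁴`, `e³ ∧ e⁵`, `e⁴ ∧ e⁵`, and each term of `ω₁ ∧ ω₁ ∧ e¹` and of `ω₁ ∧ ω₁ ∧ e²` contains
one of them.

Otherwise take `α = e¹` and `φ = e² ∧ e³`. Now `ωᵢ ∧ α ∧ φ = 0` kills the `e⁴ ∧ e⁵` coefficient,
and on such 2-forms the pairing `(β, γ) ↦ β ∧ γ ∧ α` is, modulo its radical, the split form of
signature `(2, 2)` in the coefficients of `e² ∧ e⁴`, `e² ∧ e⁵`, `e³ ∧ e⁴`, `e³ ∧ e⁵`. Such a form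
has no three mutually orthogonal vectors of the same nonzero length, so the common length
`ωᵢ ∧ ωᵢ ∧ α = v ∧ α` vanishes.
-/

open Matrix

section SplitForm

variable {𝕜 n : Type*} [Field 𝕜] [Fintype n]

theorem exists_ne_zero_dotProduct_eq_zero₂ (hn : 2 < Fintype.card n) (p q : n → 𝕜) :
    ∃ g : n → 𝕜, g ≠ 0 ∧ g ⬝ᵥ p = 0 ∧ g ⬝ᵥ q = 0 := by
  have hdep : ¬ LinearIndependent 𝕜 fun i => ![p i, q i] := fun hli => by
    simpa using hn.trans_le hli.fintype_card_le_finrank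
  obtain ⟨g, hg, i, hi⟩ := Fintype.not_linearIndependent_iff.mp hdep
  refine ⟨g, fun h => hi (by simp [h]), ?_, ?_⟩
  · simpa [dotProduct, mul_comm] using congrFun hg 0
  · simpa [dotProduct, mul_comm] using congrFun hg 1

variable [LinearOrder 𝕜] [IsStrictOrderedRing 𝕜]

theorem dotProduct_self_pos {g : n → 𝕜} (hg : g ≠ 0) : 0 < g ⬝ᵥ g :=
  lt_of_le_of_ne (Finset.sum_nonneg fun i _ => mul_self_nonneg (g i))
    (Ne.symm (mt dotProduct_self_eq_zero.mp hg))

/-- The polarization of the split quadratic form `ad - bc` on `𝕜⁴` has signature `(2, 2)`, so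
it admits no orthogonal triple of vectors of equal nonzero length. -/
theorem eq_zero_of_split_gram {A B C D : Fin 3 → 𝕜} {t : 𝕜}
    (h : ∀ i j, A i * D j + D i * A j - (B i * C j + C i * B j) = if i = j then t else 0) :
    t = 0 := by
  have hdiag (i) : A i * D i + D i * A i - (B i * C i + C i * B i) = t := by simpa using h i i
  have hoff (i j) (hij : i ≠ j) : A i * D j + D i * A j - (B i * C j + C i * B j) = 0 := by
    simpa [hij] using h i j
  have gram (g : Fin 3 → 𝕜) :
      2 * ((g ⬝ᵥ A) * (g ⬝ᵥ D) - (g ⬝ᵥ B) * (g ⬝ᵥ C)) = t * (g ⬝ᵥ g) := by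
    simp only [dotProduct, Fin.sum_univ_three]
    linear_combination g 0 ^ 2 * hdiag 0 + g 1 ^ 2 * hdiag 1 + g 2 ^ 2 * hdiag 2
      + 2 * g 0 * g 1 * hoff 0 1 (by decide) + 2 * g 0 * g 2 * hoff 0 2 (by decide)
      + 2 * g 1 * g 2 * hoff 1 2 (by decide)
  -- `∑ gᵢ (Aᵢ, Bᵢ, Cᵢ, Dᵢ)` lies in the negative definite plane `a + d = b - c = 0` of the form,
  -- `∑ g'ᵢ (Aᵢ, Bᵢ, Cᵢ, Dᵢ)` in the positive definite plane `a - d = b + c = 0`.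
  obtain ⟨g, hg, hAD, hBC⟩ := exists_ne_zero_dotProduct_eq_zero₂ (by simp) (A + D) (B - C)
  obtain ⟨g', hg', hAD', hBC'⟩ := exists_ne_zero_dotProduct_eq_zero₂ (by simp) (A - D) (B + C)
  simp only [dotProduct_add, dotProduct_sub] at hAD hBC hAD' hBC'
  have hneg : t * (g ⬝ᵥ g) ≤ 0 := by
    rw [← gram g, show g ⬝ᵥ D = -(g ⬝ᵥ A) by linear_combination hAD,
      show g ⬝ᵥ C = g ⬝ᵥ B by linear_combination -hBC]
    nlinarith [sq_nonneg (g ⬝ᵥ A), sq_nonneg (g ⬝ᵥ B)]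
  have hpos : 0 ≤ t * (g' ⬝ᵥ g') := by
    rw [← gram g', show g' ⬝ᵥ D = g' ⬝ᵥ A by linear_combination -hAD',
      show g' ⬝ᵥ C = -(g' ⬝ᵥ B) by linear_combination hBC']
    nlinarith [sq_nonneg (g' ⬝ᵥ A), sq_nonneg (g' ⬝ᵥ B)]
  have := dotProduct_self_pos hg
  have := dotProduct_self_pos hg'
  apply le_antisymm <;> nlinarith

end SplitForm

theorem Module.exists_basis_extending {K V : Type*} [DivisionRing K] [AddCommGroup V]
    [Module K V] [FiniteDimensional K V] {d n : ℕ} (hd : finrank K V = d) (hn : n ≤ d)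
    (v : Fin n → V) (hv : LinearIndependent K v) :
    ∃ b : Basis (Fin d) K V, ∀ i, b (Fin.castLE hn i) = v i := by
  induction hk : d - n generalizing n with
  | zero =>
    obtain rfl : n = d := by omega
    exact ⟨.mk hv (hv.span_eq_top_of_card_eq_finrank' (by simp [hd])).ge, fun i => by simp⟩
  | succ k ih =>
    obtain ⟨x, hx⟩ := exists_linearIndependent_snoc_of_lt_finrank hv (by omega)
    obtain ⟨b, hb⟩ := ih (by omega) _ hx (by omega)
    exact ⟨b, fun i => by simpa using hb (Fin.castSucc i)⟩

namespace ExteriorAlgebra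

section Coordinates

variable {R M : Type*} [CommRing R] [AddCommGroup M] [Module R M]

theorem ι_mul_ι_swap (x y : M) : ι R x * ι R y = -(ι R y * ι R x) :=
  eq_neg_of_add_eq_zero_left (ι_add_mul_swap x y)

theorem ι_mul_ι_mul_ι_comm (x y z : M) : ι R x * (ι R y * ι R z) = ι R y * ι R z * ι R x := by
  rw [← mul_assoc, ι_mul_ι_swap x y, neg_mul, mul_assoc, ι_mul_ι_swap x z, mul_neg, neg_neg,
    mul_assoc]

variable (u : Fin 5 → M)

/- The order hypotheses make the next two lemmas terminating `simp` rules that sort products of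
the generators `ι (u i)`. -/
theorem ι_mul_ι_of_lt {i j : Fin 5} (_ : j < i) :
    ι R (u i) * ι R (u j) = -(ι R (u j) * ι R (u i)) :=
  ι_mul_ι_swap _ _

theorem ι_mul_ι_mul_of_lt {i j : Fin 5} (h : j < i) (x : ExteriorAlgebra R M) :
    ι R (u i) * (ι R (u j) * x) = -(ι R (u j) * (ι R (u i) * x)) := by
  rw [← mul_assoc, ι_mul_ι_of_lt u h, neg_mul, mul_assoc]

theorem ι_mul_ι_mul_self (i : Fin 5) (x : ExteriorAlgebra R M) :
    ι R (u i) * (ι R (u i) * x) = 0 := by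
  rw [← mul_assoc, ι_sq_zero, zero_mul]

variable (R) in
def twoForm : (Fin 10 → R) →ₗ[R] ExteriorAlgebra R M where
  toFun c :=
    c 0 • (ι R (u 0) * ι R (u 1)) + c 1 • (ι R (u 0) * ι R (u 2)) +
    c 2 • (ι R (u 0) * ι R (u 3)) + c 3 • (ι R (u 0) * ι R (u 4)) +
    c 4 • (ι R (u 1) * ι R (u 2)) + c 5 • (ι R (u 1) * ι R (u 3)) +
    c 6 • (ι R (u 1) * ι R (u 4)) + c 7 • (ι R (u 2) * ι R (u 3)) +
    c 8 • (ι R (u 2) * ι R (u 4)) + c 9 • (ι R (u 3) * ι R (u 4))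
  map_add' c c' := by simp only [Pi.add_apply, add_smul]; abel
  map_smul' r c := by simp only [Pi.smul_apply, smul_eq_mul, mul_smul, smul_add, RingHom.id_apply]

variable (R) in
def volForm : ExteriorAlgebra R M :=
  ι R (u 0) * (ι R (u 1) * (ι R (u 2) * (ι R (u 3) * ι R (u 4))))

def wedgePairing (c c' : Fin 10 → R) : R :=
  c 4 * c' 9 + c 9 * c' 4 - (c 5 * c' 8 + c 8 * c' 5) + (c 6 * c' 7 + c 7 * c' 6)

theorem ι_sum_mul_ι_sum (x y : Fin 5 → R) :
    ι R (∑ i, x i • u i) * ι R (∑ i, y i • u i) = twoForm R u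
      ![x 0 * y 1 - x 1 * y 0, x 0 * y 2 - x 2 * y 0, x 0 * y 3 - x 3 * y 0,
        x 0 * y 4 - x 4 * y 0, x 1 * y 2 - x 2 * y 1, x 1 * y 3 - x 3 * y 1,
        x 1 * y 4 - x 4 * y 1, x 2 * y 3 - x 3 * y 2, x 2 * y 4 - x 4 * y 2,
        x 3 * y 4 - x 4 * y 3] := by
  simp only [Fin.sum_univ_five, map_add, map_smul, twoForm, LinearMap.coe_mk, AddHom.coe_mk,
    add_mul, mul_add, smul_mul_assoc, mul_smul_comm]
  simp +decide only [ι_mul_ι_of_lt, ι_sq_zero, smul_neg, smul_zero, add_zero, zero_add,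
    Matrix.cons_val]
  module

theorem twoForm_mul_twoForm_mul_ι₀ (c c' : Fin 10 → R) :
    twoForm R u c * twoForm R u c' * ι R (u 0) = wedgePairing c c' • volForm R u := by
  simp only [twoForm, LinearMap.coe_mk, AddHom.coe_mk, volForm, wedgePairing, add_mul, mul_add,
    smul_mul_assoc, mul_smul_comm, mul_assoc]
  simp +decide only [ι_mul_ι_of_lt, ι_mul_ι_mul_of_lt, ι_sq_zero, ι_mul_ι_mul_self, mul_neg,
    mul_zero, neg_neg, neg_zero, smul_neg, smul_zero, add_zero, zero_add]
  module

theorem twoForm_mul_ι₀₁_mul_ι₂ (c : Fin 10 → R) :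
    twoForm R u c * (ι R (u 0) * ι R (u 1)) * ι R (u 2) = c 9 • volForm R u := by
  simp only [twoForm, LinearMap.coe_mk, AddHom.coe_mk, volForm, add_mul, smul_mul_assoc,
    mul_assoc]
  simp +decide only [ι_mul_ι_of_lt, ι_mul_ι_mul_of_lt, ι_sq_zero, ι_mul_ι_mul_self, mul_neg,
    mul_zero, neg_neg, neg_zero, smul_zero, add_zero, zero_add]

theorem twoForm_mul_ι₀₁_mul_ι₃ (c : Fin 10 → R) :
    twoForm R u c * (ι R (u 0) * ι R (u 1)) * ι R (u 3) = -c 8 • volForm R u := by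
  simp only [twoForm, LinearMap.coe_mk, AddHom.coe_mk, volForm, add_mul, smul_mul_assoc,
    mul_assoc]
  simp +decide only [ι_mul_ι_of_lt, ι_mul_ι_mul_of_lt, ι_sq_zero, ι_mul_ι_mul_self, mul_neg,
    mul_zero, neg_neg, neg_zero, smul_zero, add_zero, zero_add]
  module

theorem twoForm_mul_ι₀₁_mul_ι₄ (c : Fin 10 → R) :
    twoForm R u c * (ι R (u 0) * ι R (u 1)) * ι R (u 4) = c 7 • volForm R u := by
  simp only [twoForm, LinearMap.coe_mk, AddHom.coe_mk, volForm, add_mul, smul_mul_assoc,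
    mul_assoc]
  simp +decide only [ι_mul_ι_mul_of_lt, ι_sq_zero, ι_mul_ι_mul_self, mul_neg,
    mul_zero, neg_neg, neg_zero, smul_zero, add_zero, zero_add]

theorem twoForm_mul_ι₀_mul_ι₁₂ (c : Fin 10 → R) :
    twoForm R u c * ι R (u 0) * (ι R (u 1) * ι R (u 2)) = c 9 • volForm R u := by
  simp only [twoForm, LinearMap.coe_mk, AddHom.coe_mk, volForm, add_mul, smul_mul_assoc,
    mul_assoc]
  simp +decide only [ι_mul_ι_of_lt, ι_mul_ι_mul_of_lt, ι_sq_zero, ι_mul_ι_mul_self, mul_neg,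
    mul_zero, neg_neg, neg_zero, smul_zero, add_zero, zero_add]

theorem twoForm_mul_self_mul_ι₀_eq_zero {c : Fin 10 → R}
    (h : twoForm R u c * (ι R (u 0) * ι R (u 1)) = 0) :
    twoForm R u c * twoForm R u c * ι R (u 0) = 0 := by
  have h9 : c 9 • volForm R u = 0 := by rw [← twoForm_mul_ι₀₁_mul_ι₂, h, zero_mul]
  have h8 : -c 8 • volForm R u = 0 := by rw [← twoForm_mul_ι₀₁_mul_ι₃, h, zero_mul]
  have h7 : c 7 • volForm R u = 0 := by rw [← twoForm_mul_ι₀₁_mul_ι₄, h, zero_mul]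
  rw [twoForm_mul_twoForm_mul_ι₀, wedgePairing]
  linear_combination (norm := module) (2 * c 4) • h9 + (2 * c 5) • h8 + (2 * c 6) • h7

end Coordinates

section Gram

variable {𝕜 M : Type*} [Field 𝕜] [LinearOrder 𝕜] [IsStrictOrderedRing 𝕜] [AddCommGroup M]
  [Module 𝕜 M] {u : Fin 5 → M}

theorem eq_zero_of_twoForm_gram (C : Fin 3 → Fin 10 → 𝕜) {w : ExteriorAlgebra 𝕜 M}
    (hφ : ∀ i, twoForm 𝕜 u (C i) * ι 𝕜 (u 0) * (ι 𝕜 (u 1) * ι 𝕜 (u 2)) = 0)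
    (hgram : ∀ i j, twoForm 𝕜 u (C i) * twoForm 𝕜 u (C j) * ι 𝕜 (u 0) = if i = j then w else 0) :
    w = 0 := by
  set t := wedgePairing (C 0) (C 0)
  have hw : w = t • volForm 𝕜 u := by simpa [twoForm_mul_twoForm_mul_ι₀] using (hgram 0 0).symm
  rcases eq_or_ne (volForm 𝕜 u) 0 with hvol | hvol
  · rw [hw, hvol, smul_zero]
  have hcoeff (r s : 𝕜) (h : r • volForm 𝕜 u = s • volForm 𝕜 u) : r = s :=
    smul_left_injective 𝕜 hvol h
  have h9 (i) : C i 9 = 0 := hcoeff _ _ (by rw [← twoForm_mul_ι₀_mul_ι₁₂, hφ, zero_smul])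
  have hpair (i j) : wedgePairing (C i) (C j) = if i = j then t else 0 := by
    refine hcoeff _ _ ?_
    rw [← twoForm_mul_twoForm_mul_ι₀, hgram]
    split_ifs
    exacts [hw, (zero_smul 𝕜 _).symm]
  -- Once `C i 9 = 0`, `wedgePairing` is the split form in the coordinates `6, 5, 8, 7`.
  simp only [wedgePairing] at hpair
  have ht : t = 0 := eq_zero_of_split_gram (A := fun i => C i 6) (B := fun i => C i 5)
    (C := fun i => C i 8) (D := fun i => C i 7) fun i j => by
      linear_combination (hpair i j) - C i 4 * h9 j - C j 4 * h9 i
  rw [hw, ht, zero_smul]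

end Gram

end ExteriorAlgebra

theorem Lam2_le_range_twoForm (b : Module.Basis (Fin 5) ℝ (Fin 5 → ℝ)) :
    Lam2 ≤ LinearMap.range (twoForm ℝ b) := by
  rw [Lam2, Submodule.span_le]
  rintro _ ⟨x, y, rfl⟩
  rw [← b.sum_repr x, ← b.sum_repr y, ι_sum_mul_ι_sum]
  exact LinearMap.mem_range_self _ _

theorem mul_ι_mem_Lam3 {ω : ExteriorAlgebra ℝ (Fin 5 → ℝ)} (hω : ω ∈ Lam2) (a : Fin 5 → ℝ) :
    ω * ι ℝ a ∈ Lam3 := by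
  induction hω using Submodule.span_induction with
  | mem x hx => obtain ⟨u, v, rfl⟩ := hx; exact Submodule.subset_span ⟨u, v, a, rfl⟩
  | zero => rw [zero_mul]; exact Lam3.zero_mem
  | add x y _ _ hx hy => rw [add_mul]; exact Lam3.add_mem hx hy
  | smul r x _ hx => rw [smul_mul_assoc]; exact Lam3.smul_mem r hx

theorem mul_self_mul_ι_eq_zero {p q : Fin 5 → ℝ} (hpq : LinearIndependent ℝ ![p, q])
    {ω : ExteriorAlgebra ℝ (Fin 5 → ℝ)} (hω : ω ∈ Lam2) (h : ω * (ι ℝ p * ι ℝ q) = 0) :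
    ω * ω * ι ℝ p = 0 := by
  obtain ⟨b, hb⟩ := Module.exists_basis_extending (d := 5) (by simp) (by norm_num) _ hpq
  obtain ⟨c, rfl⟩ := Lam2_le_range_twoForm b hω
  obtain rfl : b 0 = p := hb 0
  obtain rfl : b 1 = q := hb 1
  exact twoForm_mul_self_mul_ι₀_eq_zero b h

theorem mul_self_mul_ι_eq_zero_of_mem_span {p q a : Fin 5 → ℝ}
    (hpq : LinearIndependent ℝ ![p, q]) {ω : ExteriorAlgebra ℝ (Fin 5 → ℝ)} (hω : ω ∈ Lam2)
    (h : ω * (ι ℝ p * ι ℝ q) = 0) (ha : a ∈ Submodule.span ℝ {p, q}) :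
    ω * ω * ι ℝ a = 0 := by
  obtain ⟨x, y, rfl⟩ := Submodule.mem_span_pair.mp ha
  have hq : ω * ω * ι ℝ q = 0 :=
    mul_self_mul_ι_eq_zero (LinearIndependent.pair_symm_iff.mp hpq) hω
      (by rw [ι_mul_ι_swap, mul_neg, h, neg_zero])
  rw [map_add, map_smul, map_smul, mul_add, mul_smul_comm, mul_smul_comm,
    mul_self_mul_ι_eq_zero hpq hω h, hq, smul_zero, smul_zero, add_zero]

theorem mul_ι_eq_zero_of_orthogonal {a p q : Fin 5 → ℝ}
    (hli : LinearIndependent ℝ ![a, p, q]) {ω : Fin 3 → ExteriorAlgebra ℝ (Fin 5 → ℝ)}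
    (hω : ∀ i, ω i ∈ Lam2) {v : ExteriorAlgebra ℝ (Fin 5 → ℝ)}
    (hprod : ∀ i j, ω i * ω j = if i = j then v else 0)
    (hφ : ∀ i, ω i * ι ℝ a * (ι ℝ p * ι ℝ q) = 0) :
    v * ι ℝ a = 0 := by
  obtain ⟨b, hb⟩ := Module.exists_basis_extending (d := 5) (by simp) (by norm_num) _ hli
  choose C hC using fun i => Lam2_le_range_twoForm b (hω i)
  obtain rfl : b 0 = a := hb 0
  obtain rfl : b 1 = p := hb 1
  obtain rfl : b 2 = q := hb 2
  refine eq_zero_of_twoForm_gram C (fun i => by rw [hC, hφ]) fun i j => ?_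
  rw [hC, hC, hprod]
  split_ifs <;> simp

theorem stmt6_general (d : ExteriorAlgebra ℝ (Fin 5 → ℝ) →ₗ[ℝ] ExteriorAlgebra ℝ (Fin 5 → ℝ))
    (v1 v2 : Fin 5 → ℝ)
    (hvli : LinearIndependent ℝ ![v1, v2])
    (hZ2 : ∀ γ ∈ Lam2, d γ = 0 → γ * (ι ℝ v1 * ι ℝ v2) = 0)
    (hZ3 : ∀ η ∈ Lam3, d η = 0 → η * (ι ℝ v1 * ι ℝ v2) = 0) :
    ¬ ∃ (a : Fin 5 → ℝ) (ω : Fin 3 → ExteriorAlgebra ℝ (Fin 5 → ℝ)), IsHypo d a ω := by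
  rintro ⟨a, ω, hω, ⟨v, hprod, hva⟩, hd₀, hd₁, hd₂⟩
  have hφ₀ : ω 0 * (ι ℝ v1 * ι ℝ v2) = 0 := hZ2 _ (hω 0) hd₀
  have hv : ω 0 * ω 0 = v := by simpa using hprod 0 0
  by_cases ha : a ∈ Submodule.span ℝ {v1, v2}
  · exact hva (hv ▸ mul_self_mul_ι_eq_zero_of_mem_span hvli (hω 0) hφ₀ ha)
  · have hli : LinearIndependent ℝ ![a, v1, v2] := by
      rw [show ![a, v1, v2] = Fin.cons a ![v1, v2] from rfl, linearIndependent_finCons]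
      exact ⟨hvli, by rwa [Matrix.range_cons_cons_empty]⟩
    refine hva (mul_ι_eq_zero_of_orthogonal hli hω hprod fun i => ?_)
    fin_cases i
    · change ω 0 * ι ℝ a * (ι ℝ v1 * ι ℝ v2) = 0
      rw [mul_assoc, ι_mul_ι_mul_ι_comm, ← mul_assoc, hφ₀, zero_mul]
    · exact hZ3 _ (mul_ι_mem_Lam3 (hω 1) a) hd₁
    · exact hZ3 _ (mul_ι_mem_Lam3 (hω 2) a) hd₂

/-- let `𝔤` be a 5-dimensional real Lie algebra (encoded by its
Chevalley–Eilenberg differential `d`) with a coherent splitting `𝔤* = V₁ ⊕ V₂`,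
`dim V₁ = 2`, and let `φ = ι(v₁)∧ι(v₂)` span `Λ²V₁`. If every closed 2-form `γ`
satisfies `γ∧φ = 0` and every closed 3-form `η` satisfies `η∧φ = 0`, then `𝔤`
admits no hypo structure. -/
theorem stmt6 (d : ExteriorAlgebra ℝ (Fin 5 → ℝ) →ₗ[ℝ] ExteriorAlgebra ℝ (Fin 5 → ℝ))
    (hone : d 1 = 0)
    (hleib : ∀ (v : Fin 5 → ℝ) (x : ExteriorAlgebra ℝ (Fin 5 → ℝ)),
      d (ι ℝ v * x) = d (ι ℝ v) * x - ι ℝ v * d x)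
    (hdd : ∀ x, d (d x) = 0)
    (V1 V2 : Submodule ℝ (Fin 5 → ℝ)) (hcompl : IsCompl V1 V2)
    (hdim : Module.finrank ℝ V1 = 2)
    (hc1 : ∀ m ∈ V1, d (ι ℝ m) ∈ Submodule.span ℝ
      {y : ExteriorAlgebra ℝ (Fin 5 → ℝ) | ∃ a ∈ V1, ∃ b ∈ V1, y = ι ℝ a * ι ℝ b})
    (hc2 : ∀ m ∈ V2, d (ι ℝ m) ∈ Submodule.span ℝ
      {y : ExteriorAlgebra ℝ (Fin 5 → ℝ) | ∃ a ∈ V1, ∃ b : Fin 5 → ℝ, y = ι ℝ a * ι ℝ b})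
    (v1 v2 : Fin 5 → ℝ) (hv1 : v1 ∈ V1) (hv2 : v2 ∈ V1)
    (hvli : LinearIndependent ℝ ![v1, v2])
    (hZ2 : ∀ γ ∈ Lam2, d γ = 0 → γ * (ι ℝ v1 * ι ℝ v2) = 0)
    (hZ3 : ∀ η ∈ Lam3, d η = 0 → η * (ι ℝ v1 * ι ℝ v2) = 0) :
    ¬ ∃ (a : Fin 5 → ℝ) (ω : Fin 3 → ExteriorAlgebra ℝ (Fin 5 → ℝ)), IsHypo d a ω :=
  stmt6_general d v1 v2 hvli hZ2 hZ3
end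

section
/- Let 𝔤 be a 5-dimensional real Lie algebra with a hypo structure (α, ω₁, ω₂, ω₃), and let β ∈ 𝔤* be the 1-form β(X) = tr(ad X). Then α and β are orthogonal with respect to the metric induced by the hypo structure; equivalently, in any adapted coframe f¹,...,f⁵ with α = f⁵ and dual frame f₁,...,f₅, one has β(f₅) = 0. -/
/-!
Since `ω₁ ∧ ω₁ = 2 f¹²³⁴`, the hypo condition `dω₁ = 0` forces `d f¹²³⁴ = 0`. Expanding
`d f¹²³⁴` by the Leibniz rule, the wedge of `d fᵏ` with the other three factors only sees the
`fᵏ ∧ f⁵` component of `d fᵏ`, which the Chevalley–Eilenberg formula, written in the coframe,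
identifies as `-fᵏ([f_k, f₅])`. Summing, `d f¹²³⁴ = -β(f₅) f¹²³⁴⁵` (the missing term
`k = 5` of the trace vanishes since `[f₅, f₅] = 0`), and `f¹²³⁴⁵ ≠ 0`.
-/

open ExteriorAlgebra

namespace ExteriorAlgebra

variable {R M : Type*} [CommRing R] [AddCommGroup M] [Module R M]

theorem ι_mul_ι_eq_neg (x y : M) : ι R y * ι R x = -(ι R x * ι R y) :=
  eq_neg_of_add_eq_zero_right (ι_add_mul_swap x y)

theorem commute_ι_ι_mul_ι (x a b : M) : Commute (ι R x) (ι R a * ι R b) := by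
  rw [Commute, SemiconjBy, ← mul_assoc, ι_mul_ι_eq_neg, neg_mul, mul_assoc, ι_mul_ι_eq_neg b x,
    mul_neg, neg_neg, mul_assoc]

theorem commute_ι_sum_smul_ι_mul_ι {κ : Type*} [Fintype κ] (x : M) (v : κ → M) (c : κ → κ → R) :
    Commute (ι R x) (∑ a, ∑ b, c a b • (ι R (v a) * ι R (v b))) :=
  Commute.sum_right _ _ _ fun _ _ => Commute.sum_right _ _ _ fun _ _ =>
    (commute_ι_ι_mul_ι x _ _).smul_right _

theorem ι_mul_ι_mul_self_s7 (a b : M) : ι R a * ι R b * (ι R a * ι R b) = 0 := by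
  rw [mul_assoc, (commute_ι_ι_mul_ι b a b).eq, ← mul_assoc, ← mul_assoc, ι_sq_zero, zero_mul,
    zero_mul]

theorem ι_mul_ι_add_ι_mul_ι_sq (a b a' b' : M) :
    (ι R a * ι R b + ι R a' * ι R b') * (ι R a * ι R b + ι R a' * ι R b') =
      (2 : R) • (ι R a * ι R b * (ι R a' * ι R b')) := by
  have hcomm := ((commute_ι_ι_mul_ι (R := R) a' a b).mul_left (commute_ι_ι_mul_ι b' a b)).eq
  rw [add_mul, mul_add, mul_add, ι_mul_ι_mul_self_s7, ι_mul_ι_mul_self_s7, hcomm, zero_add, add_zero,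
    two_smul]

theorem ι_mul_ιMulti_self {n : ℕ} (u : Fin n → M) (k : Fin n) : ι R (u k) * ιMulti R n u = 0 := by
  have h := (ιMulti R (n + 1)).map_eq_zero_of_eq (Matrix.vecCons (u k) u) (i := 0) (j := k.succ)
    (by simp) (Fin.succ_ne_zero k).symm
  rwa [ιMulti_succ_apply, Matrix.cons_val_zero, Matrix.tail_cons] at h

theorem ι_mul_ιMulti_removeNth {n : ℕ} (w : Fin (n + 1) → M) (p : Fin (n + 1)) :
    ι R (w p) * ιMulti R n (p.removeNth w) = (-1 : ℤ) ^ (p : ℕ) • ιMulti R (n + 1) w := by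
  have hcons := ιMulti_succ_apply (R := R) (Matrix.vecCons (w p) (p.removeNth w))
  rw [Matrix.cons_val_zero, Matrix.tail_cons] at hcons
  rw [← hcons, ← (ιMulti R (n + 1) (M := M)).neg_one_pow_smul_map_insertNth,
    Fin.insertNth_self_removeNth]

theorem ιMulti_ne_zero_of_linearIndependent {K E : Type*} [Field K] [AddCommGroup E] [Module K E]
    {n : ℕ} {v : Fin n → E} (hv : LinearIndependent K v) : ιMulti K n v ≠ 0 := by
  have h := (exteriorPower.ιMulti_family_linearIndependent_field n hv).ne_zero
    (Set.powersetCard.ofFinEmbEquiv (RelEmbedding.refl (α := Fin n) (· ≤ ·)))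
  rwa [ne_eq, ← Submodule.coe_eq_zero, exteriorPower.ιMulti_family_apply_coe, ιMulti_family,
    Equiv.symm_apply_apply] at h

theorem sum_smul_ι_mul_ι_mul_eq {κ : Type*} [Fintype κ] [DecidableEq κ] (v : κ → M)
    (c : κ → κ → R) (r : ExteriorAlgebra R M) {i j : κ} (hij : i ≠ j)
    (hr : ∀ q, q ≠ i → q ≠ j → ι R (v q) * r = 0) :
    (∑ a, ∑ b, c a b • (ι R (v a) * ι R (v b))) * r =
      (c i j - c j i) • (ι R (v i) * ι R (v j) * r) := by
  have hright : ∀ a b, b ≠ i → b ≠ j → ι R (v a) * ι R (v b) * r = 0 := fun a b hbi hbj => by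
    rw [mul_assoc, hr b hbi hbj, mul_zero]
  have hleft : ∀ a b, a ≠ i → a ≠ j → ι R (v a) * ι R (v b) * r = 0 := fun a b hai haj => by
    rw [ι_mul_ι_eq_neg, neg_mul, mul_assoc, hr a hai haj, mul_zero, neg_zero]
  have hpair : ∀ a, (∑ b, c a b • (ι R (v a) * ι R (v b))) * r =
      c a i • (ι R (v a) * ι R (v i) * r) + c a j • (ι R (v a) * ι R (v j) * r) := fun a => by
    simp only [Finset.sum_mul, smul_mul_assoc]
    exact Fintype.sum_eq_add i j hij fun b ⟨hbi, hbj⟩ => by rw [hright a b hbi hbj, smul_zero]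
  rw [Finset.sum_mul, Fintype.sum_eq_add i j hij fun a ⟨hai, haj⟩ => by
    simp only [hpair, hleft a i hai haj, hleft a j hai haj, smul_zero, add_zero], hpair, hpair,
    ι_sq_zero, ι_sq_zero, ι_mul_ι_eq_neg (v i) (v j)]
  simp only [zero_mul, smul_zero, zero_add, add_zero, neg_mul, smul_neg, sub_smul, ← sub_eq_add_neg]

section Antiderivation

variable (d : ExteriorAlgebra R M →ₗ[R] ExteriorAlgebra R M)
  (hleib : ∀ (v : M) (x : ExteriorAlgebra R M), d (ι R v * x) = d (ι R v) * x - ι R v * d x)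
include hleib

theorem d_ι_mul_ι_mul (a b : M) (x : ExteriorAlgebra R M) :
    d (ι R a * ι R b * x) = d (ι R a * ι R b) * x + ι R a * ι R b * d x := by
  rw [mul_assoc, hleib, hleib, hleib, sub_mul, mul_sub, sub_sub_eq_add_sub, add_sub_right_comm]
  simp only [mul_assoc]

theorem d_ι_mul_ι_mul_ι_mul_ι_eq_zero_of_d_eq_zero [Invertible (2 : R)] (a b a' b' : M)
    (h : d (ι R a * ι R b + ι R a' * ι R b') = 0) :
    d (ι R a * ι R b * (ι R a' * ι R b')) = 0 := by
  set ω := ι R a * ι R b + ι R a' * ι R b' with hω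
  have hsq : d (ω * ω) = 0 := calc
    d (ω * ω) = d (ι R a * ι R b * ω) + d (ι R a' * ι R b' * ω) := by rw [hω, add_mul, map_add]
    _ = d ω * ω + ω * d ω := by
      rw [d_ι_mul_ι_mul d hleib, d_ι_mul_ι_mul d hleib, hω, map_add, add_mul, add_mul]
      abel
    _ = 0 := by rw [h, zero_mul, mul_zero, add_zero]
  rw [hω, ι_mul_ι_add_ι_mul_ι_sq, map_smul] at hsq
  simpa only [smul_smul, invOf_mul_self, one_smul, smul_zero] using congrArg (⅟(2 : R) • ·) hsq

theorem d_ιMulti {n : ℕ} (hcomm : ∀ x y : M, Commute (ι R x) (d (ι R y))) (w : Fin (n + 1) → M) :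
    d (ιMulti R (n + 1) w) =
      ∑ p : Fin (n + 1), (-1 : ℤ) ^ (p : ℕ) • (d (ι R (w p)) * ιMulti R n (p.removeNth w)) := by
  induction n with
  | zero =>
    rw [ιMulti_succ_apply, Fin.sum_univ_one]
    simp
  | succ n ih =>
    have hremove : ∀ p : Fin (n + 1),
        p.succ.removeNth w = Matrix.vecCons (w 0) (p.removeNth (Matrix.vecTail w)) := fun p => by
      ext k
      cases k using Fin.cases <;> simp [Fin.removeNth_apply, Matrix.vecTail]
    rw [ιMulti_succ_apply, hleib, ih, Fin.sum_univ_succ (n := n + 1), Finset.mul_sum,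
      sub_eq_add_neg, ← Finset.sum_neg_distrib, Fin.removeNth_zero]
    congr 1
    · rw [Fin.val_zero, pow_zero, one_smul]
      rfl
    refine Finset.sum_congr rfl fun p _ => ?_
    rw [hremove, ιMulti_succ_apply, Matrix.cons_val_zero, Matrix.tail_cons, mul_smul_comm,
      ← mul_assoc, (hcomm _ _).eq, mul_assoc, Fin.val_succ, pow_succ, mul_neg_one, neg_smul]
    rfl

theorem d_ιMulti_vecTail {n : ℕ} (hcomm : ∀ x y : M, Commute (ι R x) (d (ι R y)))
    (v : Fin (n + 2) → M) (c : Fin (n + 2) → Fin (n + 2) → Fin (n + 2) → R)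
    (hc : ∀ p, d (ι R (v p)) = ∑ a, ∑ b, c p a b • (ι R (v a) * ι R (v b))) :
    d (ιMulti R (n + 1) (Matrix.vecTail v)) =
      (∑ p : Fin (n + 1), (c p.succ 0 p.succ - c p.succ p.succ 0)) • ιMulti R (n + 2) v := by
  rw [d_ιMulti d hleib hcomm, Finset.sum_smul]
  refine Finset.sum_congr rfl fun p _ => ?_
  have hr : ∀ q, q ≠ 0 → q ≠ p.succ →
      ι R (v q) * ιMulti R n (p.removeNth (Matrix.vecTail v)) = 0 := by
    intro q hq0 hqp
    obtain ⟨q, rfl⟩ := Fin.exists_succ_eq.mpr hq0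
    obtain ⟨k, rfl⟩ := Fin.exists_succAbove_eq (x := q) (y := p) fun h => hqp (h ▸ rfl)
    exact ι_mul_ιMulti_self _ k
  have hsign : ι R (v 0) * (ι R (v p.succ) * ιMulti R n (p.removeNth (Matrix.vecTail v))) =
      (-1 : ℤ) ^ (p : ℕ) • ιMulti R (n + 2) v := by
    rw [show v p.succ = Matrix.vecTail v p from rfl, ι_mul_ιMulti_removeNth, mul_smul_comm,
      ← ιMulti_succ_apply]
  rw [show Matrix.vecTail v p = v p.succ from rfl, hc, sum_smul_ι_mul_ι_mul_eq v _ _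
    (Fin.succ_ne_zero p).symm hr, mul_assoc, hsign, smul_comm, smul_smul, ← pow_add,
    Even.neg_one_pow ⟨_, rfl⟩, one_smul]

end Antiderivation

end ExteriorAlgebra

section Coframe

-- A coframe is a family `v` of covectors; when `G * Matrix.of v = 1`, the columns `G.col a`
-- form the dual frame.
variable {n R : Type*} [Fintype n] [DecidableEq n] [CommRing R]

theorem Matrix.eq_col_of_mulVec_eq_single {v : n → n → R} {G : Matrix n n R}
    (h : G * Matrix.of v = 1) {X : n → R} {k : n} (hX : (Matrix.of v).mulVec X = Pi.single k 1) :
    X = G.col k := by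
  rw [← Matrix.mulVec_single_one, ← hX, Matrix.mulVec_mulVec, h, Matrix.one_mulVec]

theorem LinearMap.trace_eq_sum_dotProduct_col (T : (n → R) →ₗ[R] (n → R)) {v : n → n → R}
    {G : Matrix n n R} (h : G * Matrix.of v = 1) :
    LinearMap.trace R (n → R) T = ∑ a, v a ⬝ᵥ T (G.col a) := by
  rw [LinearMap.trace_eq_matrix_trace R (Pi.basisFun R n), LinearMap.toMatrix_eq_toMatrix']
  calc (LinearMap.toMatrix' T).trace = (Matrix.of v * (LinearMap.toMatrix' T * G)).trace := by
        rw [Matrix.trace_mul_comm, Matrix.mul_assoc, h, Matrix.mul_one]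
    _ = ∑ a, v a ⬝ᵥ T (G.col a) := by
        refine Finset.sum_congr rfl fun a _ => ?_
        conv_rhs => rw [← Matrix.toLin'_toMatrix' T]
        rfl

theorem ExteriorAlgebra.sum_smul_ι_single_mul_ι_single_eq (β : (n → R) →ₗ[R] (n → R) →ₗ[R] R)
    {v : n → n → R} {G : Matrix n n R} (h : G * Matrix.of v = 1) :
    ∑ i, ∑ j, β (Pi.single i 1) (Pi.single j 1) •
        (ι R (Pi.single i 1 : n → R) * ι R (Pi.single j 1 : n → R)) =
      ∑ a, ∑ b, β (G.col a) (G.col b) • (ι R (v a) * ι R (v b)) := by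
  have hsingle : ∀ i, ι R (Pi.single i 1 : n → R) = ∑ a, G i a • ι R (v a) := fun i => by
    have hrow : (Pi.single i 1 : n → R) = ∑ a, G i a • v a := by
      ext k
      simpa [Matrix.mul_apply, Matrix.one_apply, Finset.sum_apply, Pi.single_apply, eq_comm]
        using (congrFun (congrFun h i) k).symm
    rw [hrow, map_sum]
    simp only [map_smul]
  have hcol : ∀ a, G.col a = ∑ i, G i a • Pi.single i 1 := fun a => by
    ext k
    simp [Finset.sum_apply, Pi.single_apply]
  have hβ : ∀ a b, β (G.col a) (G.col b) =
      ∑ i, ∑ j, G i a * G j b * β (Pi.single i 1) (Pi.single j 1) := fun a b => by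
    simp only [hcol, map_sum, map_smul, LinearMap.sum_apply, LinearMap.smul_apply, smul_eq_mul,
      Finset.mul_sum, mul_assoc]
    rw [Finset.sum_comm]
    exact Finset.sum_congr rfl fun _ _ => Finset.sum_congr rfl fun _ _ => by ring
  simp only [hsingle, hβ, Finset.sum_mul_sum, smul_mul_smul_comm, Finset.smul_sum, Finset.sum_smul,
    smul_smul]
  simp only [← Fintype.sum_prod_type']
  exact Fintype.sum_equiv ⟨fun x => (x.2.2.1, x.2.2.2, x.1, x.2.1),
    fun x => (x.2.2.1, x.2.2.2, x.1, x.2.1), fun _ => rfl, fun _ => rfl⟩ _ _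
    fun x => by rw [Equiv.coe_fn_mk, mul_comm]

theorem ExteriorAlgebra.d_ι_eq_sum_of_mul_eq_one
    (B : (n → R) →ₗ[R] (n → R) →ₗ[R] (n → R))
    (d : ExteriorAlgebra R (n → R) →ₗ[R] ExteriorAlgebra R (n → R)) (s : R)
    (hlink : ∀ ξ : n → R, d (ι R ξ) = s • ∑ i, ∑ j,
      (∑ k, ξ k * B (Pi.single i 1) (Pi.single j 1) k) •
        (ι R (Pi.single i 1 : n → R) * ι R (Pi.single j 1 : n → R)))
    {v : n → n → R} {G : Matrix n n R} (h : G * Matrix.of v = 1) (ξ : n → R) :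
    d (ι R ξ) = ∑ a, ∑ b, (s * (ξ ⬝ᵥ B (G.col a) (G.col b))) • (ι R (v a) * ι R (v b)) := by
  have hframe := sum_smul_ι_single_mul_ι_single_eq (B.compr₂ (dotProductBilin R R ξ)) h
  rw [hlink, show ∑ i, ∑ j, (∑ k, ξ k * B (Pi.single i 1) (Pi.single j 1) k) •
    (ι R (Pi.single i 1 : n → R) * ι R (Pi.single j 1 : n → R)) = _ from hframe]
  simp only [Finset.smul_sum, smul_smul]
  rfl

end Coframe

theorem stmt7_general
    (B : (Fin 5 → ℝ) →ₗ[ℝ] (Fin 5 → ℝ) →ₗ[ℝ] (Fin 5 → ℝ))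
    (hanti : ∀ X Y, B X Y = - B Y X)
    (d : ExteriorAlgebra ℝ (Fin 5 → ℝ) →ₗ[ℝ] ExteriorAlgebra ℝ (Fin 5 → ℝ))
    (hleib : ∀ (v : Fin 5 → ℝ) (x : ExteriorAlgebra ℝ (Fin 5 → ℝ)),
      d (ι ℝ v * x) = d (ι ℝ v) * x - ι ℝ v * d x)
    (hlink : ∀ ξ : Fin 5 → ℝ, d (ι ℝ ξ) =
      -((1 : ℝ)/2) • ∑ i : Fin 5, ∑ j : Fin 5,
        (∑ k : Fin 5, ξ k * B (Pi.single i 1) (Pi.single j 1) k) • (e i * e j))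
    (f : Fin 5 → (Fin 5 → ℝ)) (hf : LinearIndependent ℝ f)
    (hw1 : d (ι ℝ (f 0) * ι ℝ (f 1) + ι ℝ (f 2) * ι ℝ (f 3)) = 0)
    (X : Fin 5 → ℝ)
    (hX : ∀ i, (∑ k, f i k * X k) = if i = 4 then (1 : ℝ) else 0) :
    LinearMap.trace ℝ (Fin 5 → ℝ) (B X) = 0 := by
  -- reorder the coframe as `(f⁵, f¹, f², f³, f⁴)`, so that `f¹²³⁴` is built from its tail
  set v : Fin 5 → Fin 5 → ℝ := f ∘ ![4, 0, 1, 2, 3]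
  have hv : LinearIndependent ℝ v := hf.comp _ (by decide)
  set G := (Matrix.of v)⁻¹
  have hG : G * Matrix.of v = 1 := Matrix.nonsing_inv_mul _
    ((Matrix.isUnit_iff_isUnit_det _).mp (Matrix.linearIndependent_rows_iff_isUnit.mp hv))
  have hXG : X = G.col 0 := Matrix.eq_col_of_mulVec_eq_single hG <| by
    ext i
    fin_cases i <;> simp [v, Matrix.mulVec, dotProduct, hX]
  have hdι := d_ι_eq_sum_of_mul_eq_one B d _ hlink hG
  have hθ : d (ιMulti ℝ 4 (Matrix.vecTail v)) = 0 := by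
    convert d_ι_mul_ι_mul_ι_mul_ι_eq_zero_of_d_eq_zero d hleib (f 0) (f 1) (f 2) (f 3) hw1 using 2
    simp [ιMulti_apply, v, Matrix.vecTail, mul_assoc]
  rw [d_ιMulti_vecTail d hleib (fun x y => hdι y ▸ commute_ι_sum_smul_ι_mul_ι x _ _) v _
    fun p => hdι (v p)] at hθ
  have hsum := (smul_eq_zero.mp hθ).resolve_right (ιMulti_ne_zero_of_linearIndependent hv)
  rw [LinearMap.trace_eq_sum_dotProduct_col (B X) hG, Fin.sum_univ_succ, ← hXG,
    self_eq_neg.mp (hanti X X), dotProduct_zero, zero_add, ← neg_eq_zero,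
    ← Finset.sum_neg_distrib, ← hsum]
  refine Finset.sum_congr rfl fun p _ => ?_
  rw [hanti (G.col p.succ), dotProduct_neg, hXG]
  ring

/-- let `𝔤` be a 5-dimensional real Lie algebra, with bracket `B` (on `ℝ⁵`)
and Chevalley–Eilenberg differential `d` on `Λ*𝔤*` (linked to `B` by
`dξ = −Σ_{i<j} ξ([eᵢ,eⱼ]) eⁱ∧eʲ`), carrying a hypo structure with adapted coframe
`f¹,…,f⁵` (so `α = f⁵`). If `X = f₅` is the corresponding dual frame vector
(`fⁱ(X) = δⁱ₅`), then `β(X) = tr(ad X) = 0`; i.e. `α` and `β` are orthogonal. -/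
theorem stmt7
    (B : (Fin 5 → ℝ) →ₗ[ℝ] (Fin 5 → ℝ) →ₗ[ℝ] (Fin 5 → ℝ))
    (hanti : ∀ X Y, B X Y = - B Y X)
    (hjac : ∀ X Y Z, B X (B Y Z) = B (B X Y) Z + B Y (B X Z))
    (d : ExteriorAlgebra ℝ (Fin 5 → ℝ) →ₗ[ℝ] ExteriorAlgebra ℝ (Fin 5 → ℝ))
    (hone : d 1 = 0)
    (hleib : ∀ (v : Fin 5 → ℝ) (x : ExteriorAlgebra ℝ (Fin 5 → ℝ)),
      d (ι ℝ v * x) = d (ι ℝ v) * x - ι ℝ v * d x)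
    (hlink : ∀ ξ : Fin 5 → ℝ, d (ι ℝ ξ) =
      -((1 : ℝ)/2) • ∑ i : Fin 5, ∑ j : Fin 5,
        (∑ k : Fin 5, ξ k * B (Pi.single i 1) (Pi.single j 1) k) • (e i * e j))
    (f : Fin 5 → (Fin 5 → ℝ)) (hf : LinearIndependent ℝ f)
    (hw1 : d (ι ℝ (f 0) * ι ℝ (f 1) + ι ℝ (f 2) * ι ℝ (f 3)) = 0)
    (hw2 : d ((ι ℝ (f 0) * ι ℝ (f 2) + ι ℝ (f 3) * ι ℝ (f 1)) * ι ℝ (f 4)) = 0)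
    (hw3 : d ((ι ℝ (f 0) * ι ℝ (f 3) + ι ℝ (f 1) * ι ℝ (f 2)) * ι ℝ (f 4)) = 0)
    (X : Fin 5 → ℝ)
    (hX : ∀ i, (∑ k, f i k * X k) = if i = 4 then (1 : ℝ) else 0) :
    LinearMap.trace ℝ (Fin 5 → ℝ) (B X) = 0 :=
  stmt7_general B hanti d hleib hlink f hf hw1 X hX
end

section
/- Let 𝔤 = A₅,₇(p,−p,−1) with de¹ = e¹⁵, de² = p·e²⁵, de³ = −p·e³⁵, de⁴ = −e⁴⁵, de⁵ = 0. Then the SU(2)-structure adapted to the coframe f¹=e¹, f²=e⁴, f³=e², f⁴=e³, f⁵=e⁵ is hypo: d(e¹⁴+e²³) = 0, d((e¹²+e³⁴)∧e⁵) = 0, d((e¹³+e⁴²)∧e⁵) = 0. -/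
/-!
The differential is diagonal in the coframe, `d eⁱ = λᵢ eⁱ ∧ e⁵` with
`λ = (1, p, -p, -1, 0)`. Hence `d(eⁱ ∧ eʲ) = -(λᵢ + λⱼ) eⁱ ∧ eʲ ∧ e⁵`, which vanishes for `e¹⁴` and
`e²³`, and any `eⁱ ∧ eʲ ∧ e⁵` is closed because every term of its differential contains `e⁵` twice.
-/

open ExteriorAlgebra

namespace ExteriorAlgebra

variable {R M : Type*} [CommRing R] [AddCommGroup M] [Module R M]

theorem ι_mul_ι_anticomm (u v : M) : ι R u * ι R v = -(ι R v * ι R u) :=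
  eq_neg_of_add_eq_zero_left (ι_add_mul_swap u v)

theorem ι_mul_ι_mul_ι_self (u v : M) : ι R u * ι R v * ι R v = 0 := by
  rw [mul_assoc, ι_sq_zero, mul_zero]

variable (d : ExteriorAlgebra R M →ₗ[R] ExteriorAlgebra R M)
  (hleib : ∀ (v : M) (x : ExteriorAlgebra R M), d (ι R v * x) = d (ι R v) * x - ι R v * d x)
  {u v w : M} {a b : R}
include hleib

theorem d_ι_mul_ι_of_eq_smul_mul (hu : d (ι R u) = a • (ι R u * ι R w))
    (hv : d (ι R v) = b • (ι R v * ι R w)) :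
    d (ι R u * ι R v) = -((a + b) • (ι R u * ι R v * ι R w)) := by
  have hwv : ι R w * ι R v = -(ι R v * ι R w) := ι_mul_ι_anticomm w v
  rw [hleib, hu, hv, smul_mul_assoc, mul_assoc, hwv, mul_smul_comm, mul_neg, ← mul_assoc]
  module

theorem d_ι_mul_ι_mul_ι_eq_zero (hw : d (ι R w) = 0) (hu : d (ι R u) = a • (ι R u * ι R w))
    (hv : d (ι R v) = b • (ι R v * ι R w)) : d (ι R u * ι R v * ι R w) = 0 := by
  have hvw : d (ι R v * ι R w) = 0 := by
    rw [d_ι_mul_ι_of_eq_smul_mul d hleib hv (b := 0) (by rw [hw, zero_smul]),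
      ι_mul_ι_mul_ι_self, smul_zero, neg_zero]
  have hwvw : ι R w * (ι R v * ι R w) = 0 := by
    rw [← mul_assoc, ι_mul_ι_anticomm w v, neg_mul, ι_mul_ι_mul_ι_self, neg_zero]
  rw [mul_assoc, hleib, hvw, hu, smul_mul_assoc, mul_assoc, hwvw]
  simp

end ExteriorAlgebra

theorem stmt18_general (p : ℝ)
    (d : ExteriorAlgebra ℝ (Fin 5 → ℝ) →ₗ[ℝ] ExteriorAlgebra ℝ (Fin 5 → ℝ))
    (hleib : ∀ (v : Fin 5 → ℝ) (x : ExteriorAlgebra ℝ (Fin 5 → ℝ)),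
      d (ι ℝ v * x) = d (ι ℝ v) * x - ι ℝ v * d x)
    (h1 : d (e 0) = e 0 * e 4) (h2 : d (e 1) = p • (e 1 * e 4))
    (h3 : d (e 2) = -(p • (e 2 * e 4))) (h4 : d (e 3) = -(e 3 * e 4))
    (h5 : d (e 4) = 0) :
    d (e 0 * e 3 + e 1 * e 2) = 0 ∧
    d ((e 0 * e 1 + e 2 * e 3) * e 4) = 0 ∧
    d ((e 0 * e 2 + e 3 * e 1) * e 4) = 0 := by
  have h1' : d (e 0) = (1 : ℝ) • (e 0 * e 4) := by rw [h1, one_smul]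
  have h3' : d (e 2) = (-p) • (e 2 * e 4) := by rw [h3, neg_smul]
  have h4' : d (e 3) = (-1 : ℝ) • (e 3 * e 4) := by rw [h4, neg_one_smul]
  unfold e at h1' h2 h3' h4' h5 ⊢
  refine ⟨?_, ?_, ?_⟩
  · rw [map_add, d_ι_mul_ι_of_eq_smul_mul d hleib h1' h4',
      d_ι_mul_ι_of_eq_smul_mul d hleib h2 h3']
    simp
  · rw [add_mul, map_add, d_ι_mul_ι_mul_ι_eq_zero d hleib h5 h1' h2,
      d_ι_mul_ι_mul_ι_eq_zero d hleib h5 h3' h4', add_zero]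
  · rw [add_mul, map_add, d_ι_mul_ι_mul_ι_eq_zero d hleib h5 h1' h3',
      d_ι_mul_ι_mul_ι_eq_zero d hleib h5 h4' h2, add_zero]

/-- on `A₅,₇(p,−p,−1)` with `de¹ = e¹⁵`, `de² = p·e²⁵`, `de³ = −p·e³⁵`,
`de⁴ = −e⁴⁵`, `de⁵ = 0`, the SU(2)-structure adapted to the coframe
`f¹=e¹, f²=e⁴, f³=e², f⁴=e³, f⁵=e⁵` is hypo:
`d(e¹⁴+e²³) = 0`, `d((e¹²+e³⁴)∧e⁵) = 0`, `d((e¹³+e⁴²)∧e⁵) = 0`. -/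
theorem stmt18 (p : ℝ)
    (d : ExteriorAlgebra ℝ (Fin 5 → ℝ) →ₗ[ℝ] ExteriorAlgebra ℝ (Fin 5 → ℝ))
    (hone : d 1 = 0)
    (hleib : ∀ (v : Fin 5 → ℝ) (x : ExteriorAlgebra ℝ (Fin 5 → ℝ)),
      d (ι ℝ v * x) = d (ι ℝ v) * x - ι ℝ v * d x)
    (h1 : d (e 0) = e 0 * e 4) (h2 : d (e 1) = p • (e 1 * e 4))
    (h3 : d (e 2) = -(p • (e 2 * e 4))) (h4 : d (e 3) = -(e 3 * e 4))
    (h5 : d (e 4) = 0) :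
    d (e 0 * e 3 + e 1 * e 2) = 0 ∧
    d ((e 0 * e 1 + e 2 * e 3) * e 4) = 0 ∧
    d ((e 0 * e 2 + e 3 * e 1) * e 4) = 0 :=
  stmt18_general p d hleib h1 h2 h3 h4 h5
end
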